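/- The entropy integral bound: if N(ε) ≤ (3Cr/(√n ε))^m for ε < Cr/√n and N(ε) = 1 for ε ≥ Cr/√n, then ∫_0^∞ √(log N(ε)) dε ≤ 3Cr√(m/n)·√π. -/

import Mathlib

open MeasureTheory

/-- Entropy integral bound: if the covering number satisfies
`N(ε) ≤ (3Cr/(√n ε))^m` for `ε < Cr/√n` and `N(ε) = 1` otherwise, then
`∫_0^∞ √(log N(ε)) dε ≤ 3Cr √(m/n) √π`. -/
theorem entropy_integral_bound (C r : ℝ) (hC : 0 < C) (hr : 0 < r)
    (n : ℕ) (hn : 1 ≤ n) (m : ℕ) (hm : 1 ≤ m) (N : ℝ → ℝ)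
    (hN1 : ∀ ε : ℝ, 0 < ε → 1 ≤ N ε)
    (hNsmall : ∀ ε : ℝ, 0 < ε → ε < C * r / Real.sqrt n →
      N ε ≤ (3 * C * r / (Real.sqrt n * ε)) ^ m)
    (hNlarge : ∀ ε : ℝ, C * r / Real.sqrt n ≤ ε → N ε = 1) :
    (∫ ε in Set.Ioi (0:ℝ), Real.sqrt (Real.log (N ε))) ≤
      3 * C * r * Real.sqrt ((m : ℝ) / n) * Real.sqrt Real.pi := by
  have hn0 : (0:ℝ) < (n:ℝ) := by exact_mod_cast Nat.lt_of_lt_of_le Nat.zero_lt_one hn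
  have hsn : (0:ℝ) < Real.sqrt n := Real.sqrt_pos.2 hn0
  set a : ℝ := C * r / Real.sqrt n with ha_def
  have ha : 0 < a := div_pos (mul_pos hC hr) hsn
  set K : ℝ := Real.sqrt m * Real.sqrt (3 * a) with hK_def
  have hK0 : 0 ≤ K := mul_nonneg (Real.sqrt_nonneg _) (Real.sqrt_nonneg _)
  set g : ℝ → ℝ := (Set.Ioo (0:ℝ) a).indicator (fun ε => K / Real.sqrt ε) with hg_def
  -- pointwise bound on Ioi 0
  have hbound : ∀ ε ∈ Set.Ioi (0:ℝ), Real.sqrt (Real.log (N ε)) ≤ g ε := by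
    intro ε hε
    simp only [Set.mem_Ioi] at hε
    by_cases hεa : ε < a
    · have hmem : ε ∈ Set.Ioo (0:ℝ) a := ⟨hε, hεa⟩
      rw [hg_def, Set.indicator_of_mem hmem]
      have hq : (0:ℝ) < 3 * a / ε := by positivity
      have h1 : N ε ≤ (3 * a / ε) ^ m := by
        have := hNsmall ε hε hεa
        have heq : 3 * C * r / (Real.sqrt n * ε) = 3 * a / ε := by
          rw [ha_def]; field_simp
        rwa [heq] at this
      have hNpos : 0 < N ε := lt_of_lt_of_le one_pos (hN1 ε hε)
      have h2 : Real.log (N ε) ≤ (m:ℝ) * (3 * a / ε) := by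
        calc Real.log (N ε) ≤ Real.log ((3 * a / ε) ^ m) :=
              Real.log_le_log hNpos h1
          _ = (m:ℝ) * Real.log (3 * a / ε) := by rw [Real.log_pow]
          _ ≤ (m:ℝ) * (3 * a / ε) := by
              have := Real.log_le_self hq.le
              have hm0 : (0:ℝ) ≤ (m:ℝ) := Nat.cast_nonneg m
              nlinarith
      calc Real.sqrt (Real.log (N ε)) ≤ Real.sqrt ((m:ℝ) * (3 * a / ε)) :=
            Real.sqrt_le_sqrt h2
        _ = Real.sqrt m * Real.sqrt (3 * a / ε) := by
            rw [Real.sqrt_mul (Nat.cast_nonneg m)]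
        _ = Real.sqrt m * (Real.sqrt (3 * a) / Real.sqrt ε) := by
            rw [Real.sqrt_div (by positivity : (0:ℝ) ≤ 3 * a)]
        _ = K / Real.sqrt ε := by rw [hK_def]; ring
    · have hεa' : a ≤ ε := le_of_not_gt hεa
      have : N ε = 1 := hNlarge ε hεa'
      rw [hg_def, Set.indicator_of_notMem (by simp [Set.mem_Ioo, hεa]), this,
        Real.log_one, Real.sqrt_zero]
  -- integrability of g
  have hrpow_int : IntegrableOn (fun x : ℝ => x ^ (-(1/2) : ℝ)) (Set.Ioo 0 a) volume := by
    have h := intervalIntegral.intervalIntegrable_rpow' (a := 0) (b := a)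
      (r := (-(1/2) : ℝ)) (by norm_num)
    have := (intervalIntegrable_iff_integrableOn_Ioc_of_le ha.le).1 h
    exact this.mono_set Set.Ioo_subset_Ioc_self
  have hg_eq : ∀ x ∈ Set.Ioo (0:ℝ) a, K * x ^ (-(1/2) : ℝ) = K / Real.sqrt x := by
    intro x hx
    rw [Real.rpow_neg hx.1.le, Real.sqrt_eq_rpow]
    ring
  have hg_on : IntegrableOn (fun ε => K / Real.sqrt ε) (Set.Ioo 0 a) volume := by
    have h2 : IntegrableOn (fun x : ℝ => K * x ^ (-(1/2) : ℝ)) (Set.Ioo 0 a) volume :=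
      hrpow_int.const_mul K
    exact h2.congr_fun hg_eq measurableSet_Ioo
  have hg_int : Integrable g volume := by
    rw [hg_def]
    exact hg_on.integrable_indicator measurableSet_Ioo
  -- value of ∫ g over Ioi 0
  have hval : (∫ ε in Set.Ioi (0:ℝ), g ε) = K * (2 * Real.sqrt a) := by
    rw [hg_def, setIntegral_indicator measurableSet_Ioo]
    have hset : Set.Ioi (0:ℝ) ∩ Set.Ioo 0 a = Set.Ioo 0 a :=
      Set.inter_eq_self_of_subset_right Set.Ioo_subset_Ioi_self
    rw [hset]
    rw [← setIntegral_congr_fun measurableSet_Ioo hg_eq]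
    rw [MeasureTheory.integral_const_mul]
    congr 1
    rw [← MeasureTheory.integral_Ioc_eq_integral_Ioo,
      ← intervalIntegral.integral_of_le ha.le]
    rw [integral_rpow (Or.inl (by norm_num))]
    norm_num
    rw [Real.sqrt_eq_rpow]
    ring
  -- main inequality
  by_cases hf : IntegrableOn (fun ε => Real.sqrt (Real.log (N ε))) (Set.Ioi 0) volume
  · have hmono : (∫ ε in Set.Ioi (0:ℝ), Real.sqrt (Real.log (N ε)))
        ≤ ∫ ε in Set.Ioi (0:ℝ), g ε :=
      setIntegral_mono_on hf hg_int.integrableOn measurableSet_Ioi hbound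
    refine hmono.trans ?_
    rw [hval]
    -- RHS = 3 * a * √m * √π
    have hRHS : 3 * C * r * Real.sqrt ((m : ℝ) / n) * Real.sqrt Real.pi
        = 3 * a * Real.sqrt m * Real.sqrt Real.pi := by
      rw [Real.sqrt_div (Nat.cast_nonneg m), ha_def]
      ring
    rw [hRHS]
    have h3a : Real.sqrt (3 * a) = Real.sqrt 3 * Real.sqrt a := by
      rw [Real.sqrt_mul (by norm_num)]
    have haa : Real.sqrt a * Real.sqrt a = a := Real.mul_self_sqrt ha.le
    have hsqrt3 : Real.sqrt 3 ≤ Real.sqrt Real.pi :=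
      Real.sqrt_le_sqrt Real.pi_gt_three.le
    have h30 : (0:ℝ) ≤ Real.sqrt 3 := Real.sqrt_nonneg _
    have hm0 : (0:ℝ) ≤ Real.sqrt m := Real.sqrt_nonneg _
    have ha0 : (0:ℝ) ≤ Real.sqrt a := Real.sqrt_nonneg _
    rw [hK_def, h3a]
    have heq2 : Real.sqrt m * (Real.sqrt 3 * Real.sqrt a) * (2 * Real.sqrt a)
        = 2 * Real.sqrt 3 * (Real.sqrt m * (Real.sqrt a * Real.sqrt a)) := by ring
    rw [heq2, haa]
    have h1 : 2 * Real.sqrt 3 ≤ 3 * Real.sqrt Real.pi := by linarith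
    have h2 := mul_le_mul_of_nonneg_right h1 (mul_nonneg hm0 ha.le)
    linarith
  · rw [MeasureTheory.integral_undef hf]
    positivity
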